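/- Let n ≥ 1, let M be a nonnegative irreducible n×n real matrix, fix indices ℓ, m and reals α > 0, 𝓛 ≥ 0 with α + 𝓛 = M_{ℓm}, and let θ > 0. Then: (1) θ ≤ ρ(M_θ) ≤ ρ(M) if and only if θ ≤ ρ(M); and (2) ρ(M) < ρ(M_θ) < θ if and only if θ > ρ(M). -/

import Mathlib

/-- The spectral radius of a real square matrix: the supremum of the absolute values
of its complex eigenvalues. -/
noncomputable def specRad {n : ℕ} (A : Matrix (Fin n) (Fin n) ℝ) : ℝ :=
  sSup ((fun (μ : ℂ) => ‖μ‖) '' spectrum ℂ (A.map (fun x => (x : ℂ))))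

/-- The modified matrix `M_θ(α, 𝓛) ∈ ℝ^{(n+1)×(n+1)}`: rows and columns are indexed by
`{0, 1, …, n}` (index `i.succ` corresponding to the original index `i`), the entry
`(ℓ, m)` of `M` is replaced by `𝓛`, the entry `(0, m)` is `α`, the entry `(ℓ, 0)` is
`θ`, and all other entries involving the new index `0` are `0`. -/
def modMat {n : ℕ} (M : Matrix (Fin n) (Fin n) ℝ) (l m : Fin n) (α 𝓛 θ : ℝ) :
    Matrix (Fin (n + 1)) (Fin (n + 1)) ℝ :=
  Matrix.of fun i j =>
    if hi : i = 0 then (if j = m.succ then α else 0)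
    else if hj : j = 0 then (if i = l.succ then θ else 0)
    else if i = l.succ ∧ j = m.succ then 𝓛
    else M (i.pred hi) (j.pred hj)


/-!
By Perron–Frobenius, `M` has a positive eigenvector `u` for `ρ = ρ(M)`. Appending the coordinate
`α u_m / θ` to `u` gives a positive vector `w` with `M_θ w = (α u_m, ρ u)`: `M_θ` multiplies the
new coordinate of `w` by `θ` and the old ones by `ρ`. The Collatz–Wielandt bounds then give
`min θ ρ ≤ ρ(M_θ) ≤ max θ ρ`, with strict inequalities when `θ ≠ ρ` because `M_θ` is again
irreducible.
-/

open Matrix Filter Relation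

attribute [local instance] Matrix.linftyOpNormedRing Matrix.linftyOpNormedAlgebra

lemma exists_gt_smul_le {ι : Type*} [Fintype ι] {v y : ι → ℝ} {c : ℝ} (hv : ∀ i, 0 < v i)
    (h : ∀ i, c * v i < y i) : ∃ c' > c, c' • v ≤ y := by
  cases isEmpty_or_nonempty ι
  · exact ⟨c + 1, by linarith, fun i => isEmptyElim i⟩
  obtain ⟨i, -, hi⟩ := Finset.univ.exists_min_image (fun i => y i / v i) Finset.univ_nonempty
  refine ⟨y i / v i, (lt_div_iff₀ (hv i)).2 (h i), fun j => ?_⟩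
  simpa [le_div_iff₀ (hv j)] using hi j (Finset.mem_univ j)

lemma exists_lt_le_smul {ι : Type*} [Fintype ι] {v y : ι → ℝ} {c : ℝ} (hv : ∀ i, 0 < v i)
    (h : ∀ i, y i < c * v i) : ∃ c' < c, y ≤ c' • v := by
  obtain ⟨c', hc', hle⟩ := exists_gt_smul_le (y := -y) (c := -c) hv fun i => by
    simpa [neg_mul] using h i
  refine ⟨-c', by linarith, fun i => ?_⟩
  have := hle i
  simp only [Pi.smul_apply, Pi.neg_apply, smul_eq_mul] at this ⊢
  linarith

namespace Matrix

variable {ι : Type*} [Fintype ι]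

noncomputable def complexify {m n : Type*} (A : Matrix m n ℝ) : Matrix m n ℂ :=
  A.map (↑)

lemma complexify_pow [DecidableEq ι] (A : Matrix ι ι ℝ) (k : ℕ) :
    complexify (A ^ k) = complexify A ^ k :=
  map_pow Complex.ofRealHom.mapMatrix A k

lemma exists_mulVec_eq_smul_of_mem_spectrum [DecidableEq ι] {B : Matrix ι ι ℂ} {μ : ℂ}
    (h : μ ∈ spectrum ℂ B) : ∃ v ≠ 0, B *ᵥ v = μ • v := by
  rw [← spectrum_toLin', ← Module.End.hasEigenvalue_iff_mem_spectrum] at h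
  obtain ⟨v, hv⟩ := h.exists_hasEigenvector
  exact ⟨v, hv.2, by simpa using hv.apply_eq_smul⟩

lemma mulVec_apply_le_norm [DecidableEq ι] (B : Matrix ι ι ℝ) (w : ι → ℝ) (i : ι) :
    (B *ᵥ w) i ≤ ‖complexify B‖ * ‖fun j => (w j : ℂ)‖ := calc
  (B *ᵥ w) i ≤ ‖((B *ᵥ w) i : ℂ)‖ := by simpa using le_abs_self _
  _ = ‖(complexify B *ᵥ fun j => (w j : ℂ)) i‖ := by
      rw [← Complex.ofRealHom_eq_coe, RingHom.map_mulVec]; rfl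
  _ ≤ ‖complexify B *ᵥ fun j => (w j : ℂ)‖ := norm_le_pi_norm _ i
  _ ≤ ‖complexify B‖ * ‖fun j => (w j : ℂ)‖ := linfty_opNorm_mulVec _ _

section Nonneg

variable {A : Matrix ι ι ℝ}

lemma mulVec_mono (hA : ∀ i j, 0 ≤ A i j) {v w : ι → ℝ} (h : v ≤ w) : A *ᵥ v ≤ A *ᵥ w :=
  fun i => dotProduct_le_dotProduct_of_nonneg_left h (hA i)

lemma mulVec_nonneg (hA : ∀ i j, 0 ≤ A i j) {v : ι → ℝ} (hv : 0 ≤ v) : 0 ≤ A *ᵥ v :=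
  fun i => dotProduct_nonneg_of_nonneg (hA i) hv

lemma mul_le_mulVec_apply (hA : ∀ i j, 0 ≤ A i j) {v : ι → ℝ} (hv : 0 ≤ v) (i j : ι) :
    A i j * v j ≤ (A *ᵥ v) i :=
  Finset.single_le_sum (f := fun j => A i j * v j) (fun j _ => mul_nonneg (hA i j) (hv j))
    (Finset.mem_univ j)

lemma pow_mulVec_eq_pow_smul [DecidableEq ι] {u : ι → ℝ} {r : ℝ} (h : A *ᵥ u = r • u)
    (k : ℕ) : (A ^ k) *ᵥ u = r ^ k • u := by
  induction k with
  | zero => simp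
  | succ k ih => rw [pow_succ', ← mulVec_mulVec, ih, mulVec_smul, h, smul_smul, pow_succ]

lemma pow_smul_le_pow_mulVec [DecidableEq ι] (hA : ∀ i j, 0 ≤ A i j) {w : ι → ℝ} {c : ℝ}
    (hc : 0 ≤ c) (h : c • w ≤ A *ᵥ w) (k : ℕ) : c ^ k • w ≤ (A ^ k) *ᵥ w := by
  induction k with
  | zero => simp
  | succ k ih => calc
    c ^ (k + 1) • w = c ^ k • (c • w) := by rw [pow_succ, mul_smul]
    _ ≤ c ^ k • (A *ᵥ w) := smul_le_smul_of_nonneg_left h (pow_nonneg hc k)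
    _ = A *ᵥ (c ^ k • w) := by rw [mulVec_smul]
    _ ≤ A *ᵥ ((A ^ k) *ᵥ w) := mulVec_mono hA ih
    _ = (A ^ (k + 1)) *ᵥ w := by rw [mulVec_mulVec, pow_succ']

lemma norm_smul_le_mulVec_norm (hA : ∀ i j, 0 ≤ A i j) {z : ι → ℂ} {μ : ℂ}
    (h : complexify A *ᵥ z = μ • z) : ‖μ‖ • (fun i => ‖z i‖) ≤ A *ᵥ fun i => ‖z i‖ := by
  intro i
  calc ‖μ‖ * ‖z i‖ = ‖(complexify A *ᵥ z) i‖ := by simp [h]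
    _ ≤ ∑ j, ‖(A i j : ℂ) * z j‖ := norm_sum_le (f := fun j => (A i j : ℂ) * z j) _
    _ = (A *ᵥ fun i => ‖z i‖) i := by
        simp [mulVec, dotProduct, abs_of_nonneg (hA i _)]

lemma le_of_smul_le_mulVec_of_mulVec_le_smul (hA : ∀ i j, 0 ≤ A i j) {y v : ι → ℝ}
    {r c : ℝ} (hy : 0 ≤ y) (hy0 : y ≠ 0) (hv : ∀ i, 0 < v i) (hr : r • y ≤ A *ᵥ y)
    (hc : A *ᵥ v ≤ c • v) : r ≤ c := by
  obtain ⟨j, hj⟩ := Function.ne_iff.1 hy0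
  have : Nonempty ι := ⟨j⟩
  obtain ⟨i, -, hi⟩ := Finset.univ.exists_max_image (fun i => y i / v i) Finset.univ_nonempty
  set t := y i / v i
  have hyt : y ≤ t • v := fun j => by
    simpa [div_le_iff₀ (hv j)] using hi j (Finset.mem_univ j)
  have ht : 0 < t := pos_of_mul_pos_left (((hy j).lt_of_ne' hj).trans_le (hyt j)) (hv j).le
  have hyi : y i = t * v i := (div_mul_cancel₀ _ (hv i).ne').symm
  have : r * (t * v i) ≤ c * (t * v i) := calc
    r * (t * v i) = (r • y) i := by simp [hyi]
    _ ≤ (A *ᵥ y) i := hr i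
    _ ≤ (A *ᵥ (t • v)) i := mulVec_mono hA hyt i
    _ = t * (A *ᵥ v) i := by simp [mulVec_smul]
    _ ≤ t * (c * v i) := mul_le_mul_of_nonneg_left (hc i) ht.le
    _ = c * (t * v i) := by ring
  exact le_of_mul_le_mul_right this (mul_pos ht (hv i))

end Nonneg

section Reachability

variable [DecidableEq ι] {A : Matrix ι ι ℝ}

lemma exists_pow_apply_pos_iff_transGen (hA : ∀ i j, 0 ≤ A i j) {i j : ι} :
    (∃ k > 0, 0 < (A ^ k) i j) ↔ TransGen (fun a b => 0 < A a b) i j := by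
  constructor
  · rintro ⟨k, hk, hpos⟩
    induction k generalizing j with
    | zero => omega
    | succ k ih =>
      rcases Nat.eq_zero_or_pos k with rfl | hk
      · exact .single (by simpa using hpos)
      rw [pow_succ, mul_apply] at hpos
      obtain ⟨t, -, ht⟩ := (Finset.sum_pos_iff_of_nonneg fun t _ =>
        mul_nonneg (pow_apply_nonneg hA k i t) (hA t j)).1 hpos
      exact .tail (ih hk (pos_of_mul_pos_left ht (hA t j)))
        (pos_of_mul_pos_right ht (pow_apply_nonneg hA k i t))
  · intro h
    induction h with
    | single hab => exact ⟨1, one_pos, by simpa using hab⟩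
    | tail _ hbc ih =>
      obtain ⟨k, hk, hpos⟩ := ih
      refine ⟨k + 1, k.succ_pos, ?_⟩
      rw [pow_succ, mul_apply]
      exact (mul_pos hpos hbc).trans_le (Finset.single_le_sum
        (fun t _ => mul_nonneg (pow_apply_nonneg hA k _ t) (hA t _)) (Finset.mem_univ _))

lemma isIrreducible_iff_transGen (hA : ∀ i j, 0 ≤ A i j) :
    A.IsIrreducible ↔ ∀ i j, TransGen (fun a b => 0 < A a b) i j := by
  simp only [isIrreducible_iff_exists_pow_pos hA, exists_pow_apply_pos_iff_transGen hA]

-- `S = ∑_{k ≤ K} A ^ k` for `K` large enough to reach every entry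
lemma IsIrreducible.exists_commute_mulVec_pos (hA : A.IsIrreducible) :
    ∃ S : Matrix ι ι ℝ, Commute S A ∧ ∀ z, 0 ≤ z → z ≠ 0 → ∀ i, 0 < (S *ᵥ z) i := by
  choose f _ hf using (isIrreducible_iff_exists_pow_pos hA.nonneg).1 hA
  set K := Finset.univ.sup fun p : ι × ι => f p.1 p.2
  refine ⟨∑ k ∈ Finset.range (K + 1), A ^ k, Commute.sum_left _ _ _ fun k _ =>
    (Commute.refl A).pow_left k, fun z hz hz0 i => ?_⟩
  obtain ⟨j, hj⟩ := Function.ne_iff.1 hz0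
  have hfK : f i j ∈ Finset.range (K + 1) := Finset.mem_range_succ_iff.2 <|
    Finset.le_sup (f := fun p : ι × ι => f p.1 p.2) (Finset.mem_univ (i, j))
  rw [sum_mulVec, Finset.sum_apply]
  exact Finset.sum_pos' (fun k _ => mulVec_nonneg (pow_apply_nonneg hA.nonneg k) hz i)
    ⟨f i j, hfK, (mul_pos (hf i j) ((hz j).lt_of_ne' hj)).trans_le
      (mul_le_mulVec_apply (pow_apply_nonneg hA.nonneg _) hz i j)⟩

lemma IsIrreducible.pos_of_mulVec_eq_smul (hA : A.IsIrreducible) {u : ι → ℝ} {r : ℝ}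
    (hu : 0 ≤ u) (hu0 : u ≠ 0) (h : A *ᵥ u = r • u) (i : ι) : 0 < u i := by
  obtain ⟨j, hj⟩ := Function.ne_iff.1 hu0
  have huj : 0 < u j := (hu j).lt_of_ne' hj
  have hr : 0 ≤ r := nonneg_of_mul_nonneg_left
    (by simpa [h] using mulVec_nonneg hA.nonneg hu j) huj
  obtain ⟨k, -, hk⟩ := (isIrreducible_iff_exists_pow_pos hA.nonneg).1 hA i j
  have : 0 < r ^ k * u i := (mul_pos hk huj).trans_le <| by
    simpa [pow_mulVec_eq_pow_smul h] using
      mul_le_mulVec_apply (pow_apply_nonneg hA.nonneg k) hu i j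
  exact pos_of_mul_pos_right this (pow_nonneg hr k)

end Reachability

end Matrix

section SpectralRadius

variable {N : ℕ} {A : Matrix (Fin N) (Fin N) ℝ}

lemma norm_le_specRad {μ : ℂ} (h : μ ∈ spectrum ℂ (complexify A)) : ‖μ‖ ≤ specRad A :=
  le_csSup ((Matrix.finite_spectrum _).image _).bddAbove ⟨μ, h, rfl⟩

lemma exists_norm_eq_specRad (hN : 0 < N) (A : Matrix (Fin N) (Fin N) ℝ) :
    ∃ μ ∈ spectrum ℂ (complexify A), ‖μ‖ = specRad A := by
  have : NeZero N := ⟨hN.ne'⟩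
  exact ((spectrum.nonempty _).image _).csSup_mem ((Matrix.finite_spectrum _).image _)

lemma specRad_nonneg (A : Matrix (Fin N) (Fin N) ℝ) : 0 ≤ specRad A :=
  Real.sSup_nonneg (by rintro _ ⟨μ, -, rfl⟩; positivity)

lemma spectralRadius_le_ofReal_specRad (A : Matrix (Fin N) (Fin N) ℝ) :
    spectralRadius ℂ (complexify A) ≤ ENNReal.ofReal (specRad A) :=
  iSup₂_le fun μ hμ =>
    (ofReal_norm μ).symm.trans_le (ENNReal.ofReal_le_ofReal (norm_le_specRad hμ))

lemma eventually_norm_pow_lt {d : ℝ} (hd : specRad A < d) :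
    ∀ᶠ k in atTop, ‖complexify A ^ k‖ < d ^ k := by
  have hd0 : 0 < d := (specRad_nonneg A).trans_lt hd
  have hlt : spectralRadius ℂ (complexify A) < ENNReal.ofReal d :=
    (spectralRadius_le_ofReal_specRad A).trans_lt ((ENNReal.ofReal_lt_ofReal_iff hd0).2 hd)
  filter_upwards [(spectrum.pow_norm_pow_one_div_tendsto_nhds_spectralRadius _).eventually_lt_const
    hlt, eventually_gt_atTop 0] with k hk hk0
  rw [ENNReal.ofReal_lt_ofReal_iff hd0, one_div] at hk
  calc ‖complexify A ^ k‖ = (‖complexify A ^ k‖ ^ (k : ℝ)⁻¹) ^ k :=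
        (Real.rpow_inv_natCast_pow (norm_nonneg _) hk0.ne').symm
    _ < d ^ k := pow_lt_pow_left₀ hk (by positivity) hk0.ne'

lemma specRad_le_of_mulVec_le (hA : ∀ i j, 0 ≤ A i j) {v : Fin N → ℝ} {c : ℝ}
    (hv : ∀ i, 0 < v i) (hc : 0 ≤ c) (h : A *ᵥ v ≤ c • v) : specRad A ≤ c := by
  refine Real.sSup_le ?_ hc
  rintro _ ⟨μ, hμ, rfl⟩
  obtain ⟨z, hz0, hz⟩ := exists_mulVec_eq_smul_of_mem_spectrum hμ
  exact le_of_smul_le_mulVec_of_mulVec_le_smul hA (fun i => norm_nonneg (z i))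
    (fun h0 => hz0 (funext fun i => norm_eq_zero.1 (congrFun h0 i))) hv
    (norm_smul_le_mulVec_norm hA hz) h

-- By Gelfand's formula `‖A ^ k‖` grows more slowly than `c ^ k`, while `c ^ k • w ≤ A ^ k *ᵥ w`.
lemma le_specRad_of_smul_le_mulVec (hA : ∀ i j, 0 ≤ A i j) {w : Fin N → ℝ} {c : ℝ}
    (hw : 0 ≤ w) (hw0 : w ≠ 0) (h : c • w ≤ A *ᵥ w) : c ≤ specRad A := by
  by_contra! hlt
  have hc : 0 < c := (specRad_nonneg A).trans_lt hlt
  obtain ⟨i, hi⟩ := Function.ne_iff.1 hw0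
  have hwi : 0 < w i := (hw i).lt_of_ne' hi
  obtain ⟨d, hρd, hdc⟩ := exists_between hlt
  have hd : 0 < d := (specRad_nonneg A).trans_lt hρd
  set W := ‖fun j => (w j : ℂ)‖
  have hsmall : Tendsto (fun k => (d / c) ^ k * W) atTop (nhds 0) := by
    simpa using (tendsto_pow_atTop_nhds_zero_of_lt_one (by positivity)
      ((div_lt_one hc).2 hdc)).mul_const W
  obtain ⟨k, hk, hkW⟩ :=
    ((eventually_norm_pow_lt hρd).and (hsmall.eventually_lt_const hwi)).exists
  have : c ^ k * w i < c ^ k * w i := calc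
    c ^ k * w i ≤ ((A ^ k) *ᵥ w) i := pow_smul_le_pow_mulVec hA hc.le h k i
    _ ≤ ‖complexify A ^ k‖ * W := complexify_pow A k ▸ mulVec_apply_le_norm _ w i
    _ ≤ d ^ k * W := mul_le_mul_of_nonneg_right hk.le (norm_nonneg _)
    _ = c ^ k * ((d / c) ^ k * W) := by rw [div_pow]; field_simp
    _ < c ^ k * w i := mul_lt_mul_of_pos_left hkW (pow_pos hc k)
  exact this.false

lemma lt_specRad_of_smul_le_mulVec_of_ne (hA : A.IsIrreducible) {w : Fin N → ℝ} {c : ℝ}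
    (hw : 0 ≤ w) (hw0 : w ≠ 0) (h : c • w ≤ A *ᵥ w) (hne : A *ᵥ w ≠ c • w) :
    c < specRad A := by
  obtain ⟨S, hSA, hS⟩ := hA.exists_commute_mulVec_pos
  have hw' := hS w hw hw0
  have hgap : A *ᵥ (S *ᵥ w) - c • (S *ᵥ w) = S *ᵥ (A *ᵥ w - c • w) := by
    rw [mulVec_sub, mulVec_smul, mulVec_mulVec, mulVec_mulVec, hSA.eq]
  obtain ⟨c', hcc', hc'⟩ := exists_gt_smul_le (y := A *ᵥ (S *ᵥ w)) hw' fun i => by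
    simpa [← hgap] using hS _ (sub_nonneg.2 h) (sub_ne_zero.2 hne) i
  obtain ⟨i, -⟩ := Function.ne_iff.1 hw0
  exact hcc'.trans_le (le_specRad_of_smul_le_mulVec hA.nonneg (fun j => (hw' j).le)
    (Function.ne_iff.2 ⟨i, (hw' i).ne'⟩) hc')

lemma specRad_lt_of_mulVec_le_smul_of_ne (hA : A.IsIrreducible) {w : Fin N → ℝ} {c : ℝ}
    (hw : 0 ≤ w) (hw0 : w ≠ 0) (h : A *ᵥ w ≤ c • w) (hne : A *ᵥ w ≠ c • w) :
    specRad A < c := by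
  obtain ⟨S, hSA, hS⟩ := hA.exists_commute_mulVec_pos
  have hw' := hS w hw hw0
  have hgap : c • (S *ᵥ w) - A *ᵥ (S *ᵥ w) = S *ᵥ (c • w - A *ᵥ w) := by
    rw [mulVec_sub, mulVec_smul, mulVec_mulVec, mulVec_mulVec, hSA.eq]
  obtain ⟨c', hc'c, hc'⟩ := exists_lt_le_smul (y := A *ᵥ (S *ᵥ w)) hw' fun i => by
    simpa [← hgap] using hS _ (sub_nonneg.2 h) (sub_ne_zero.2 hne.symm) i
  obtain ⟨i, -⟩ := Function.ne_iff.1 hw0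
  have hc'0 : 0 ≤ c' := nonneg_of_mul_nonneg_left
    ((mulVec_nonneg hA.nonneg (fun j => (hw' j).le) i).trans (hc' i)) (hw' i)
  exact (specRad_le_of_mulVec_le hA.nonneg hw' hc'0 hc').trans_lt hc'c

theorem exists_pos_mulVec_eq_specRad_smul (hN : 0 < N) (hA : A.IsIrreducible) :
    ∃ u : Fin N → ℝ, (∀ i, 0 < u i) ∧ A *ᵥ u = specRad A • u := by
  obtain ⟨μ, hμ, hμA⟩ := exists_norm_eq_specRad hN A
  obtain ⟨z, hz0, hz⟩ := exists_mulVec_eq_smul_of_mem_spectrum hμ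
  set u : Fin N → ℝ := fun i => ‖z i‖
  have hu : 0 ≤ u := fun i => norm_nonneg (z i)
  have hu0 : u ≠ 0 := fun h0 => hz0 (funext fun i => norm_eq_zero.1 (congrFun h0 i))
  have hle : specRad A • u ≤ A *ᵥ u := hμA ▸ norm_smul_le_mulVec_norm hA.nonneg hz
  -- a strict inequality would push the spectral radius above itself
  have heq : A *ᵥ u = specRad A • u := by
    by_contra hne
    exact (lt_specRad_of_smul_le_mulVec_of_ne hA hu hu0 hle hne).false
  exact ⟨u, hA.pos_of_mulVec_eq_smul hu hu0 heq, heq⟩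

end SpectralRadius

lemma Fin.smul_cons {n : ℕ} {α M : Type*} [SMul M α] (c : M) (x : α) (u : Fin n → α) :
    c • (Fin.cons x u : Fin (n + 1) → α) = Fin.cons (c • x) (c • u) :=
  Matrix.smul_cons c x u

section TwoScale

variable {n : ℕ} {P : Matrix (Fin (n + 1)) (Fin (n + 1)) ℝ} {x a b : ℝ} {u : Fin n → ℝ}

lemma smul_cons_le_cons {c : ℝ} (hx : 0 ≤ x) (hu : 0 ≤ u) (ha : c ≤ a) (hb : c ≤ b) :
    c • (Fin.cons x u : Fin (n + 1) → ℝ) ≤ Fin.cons (a * x) (b • u) := by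
  rw [Fin.smul_cons, Fin.cons_le_cons]
  exact ⟨mul_le_mul_of_nonneg_right ha hx, fun i => mul_le_mul_of_nonneg_right hb (hu i)⟩

lemma cons_le_smul_cons {c : ℝ} (hx : 0 ≤ x) (hu : 0 ≤ u) (ha : a ≤ c) (hb : b ≤ c) :
    (Fin.cons (a * x) (b • u) : Fin (n + 1) → ℝ) ≤ c • Fin.cons x u := by
  rw [Fin.smul_cons, Fin.cons_le_cons]
  exact ⟨mul_le_mul_of_nonneg_right ha hx, fun i => mul_le_mul_of_nonneg_right hb (hu i)⟩

lemma eq_of_cons_eq_smul_cons {c : ℝ} (hx : x ≠ 0) {i : Fin n} (hu : u i ≠ 0)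
    (h : (Fin.cons (a * x) (b • u) : Fin (n + 1) → ℝ) = c • Fin.cons x u) : a = b := by
  rw [Fin.smul_cons, Fin.cons_inj] at h
  rw [mul_right_cancel₀ hx h.1, mul_right_cancel₀ hu (congrFun h.2 i)]

lemma cons_pos (hx : 0 < x) (hu : ∀ i, 0 < u i) : ∀ i, 0 < (Fin.cons x u : Fin (n + 1) → ℝ) i :=
  fun i => i.cases hx hu

lemma min_le_specRad_of_mulVec_cons (hP : ∀ i j, 0 ≤ P i j) (hx : 0 < x) (hu : ∀ i, 0 < u i)
    (hPw : P *ᵥ Fin.cons x u = Fin.cons (a * x) (b • u)) : min a b ≤ specRad P :=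
  le_specRad_of_smul_le_mulVec hP (fun i => (cons_pos hx hu i).le)
    (fun h => hx.ne' (congrFun h 0)) <|
    hPw ▸ smul_cons_le_cons hx.le (fun i => (hu i).le) (min_le_left a b) (min_le_right a b)

lemma specRad_le_max_of_mulVec_cons (hP : ∀ i j, 0 ≤ P i j) (hx : 0 < x) (hu : ∀ i, 0 < u i)
    (hPw : P *ᵥ Fin.cons x u = Fin.cons (a * x) (b • u)) : specRad P ≤ max a b := by
  have ha : 0 ≤ a := nonneg_of_mul_nonneg_left
    (by simpa [hPw] using mulVec_nonneg hP (fun i => (cons_pos hx hu i).le) 0) hx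
  exact specRad_le_of_mulVec_le hP (cons_pos hx hu) (ha.trans (le_max_left a b)) <|
    hPw ▸ cons_le_smul_cons hx.le (fun i => (hu i).le) (le_max_left a b) (le_max_right a b)

lemma min_lt_specRad_of_mulVec_cons (hP : P.IsIrreducible) (hn : 0 < n) (hab : a ≠ b)
    (hx : 0 < x) (hu : ∀ i, 0 < u i) (hPw : P *ᵥ Fin.cons x u = Fin.cons (a * x) (b • u)) :
    min a b < specRad P :=
  lt_specRad_of_smul_le_mulVec_of_ne hP (fun i => (cons_pos hx hu i).le)
    (fun h => hx.ne' (congrFun h 0))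
    (hPw ▸ smul_cons_le_cons hx.le (fun i => (hu i).le) (min_le_left a b) (min_le_right a b))
    (hPw ▸ fun h => hab (eq_of_cons_eq_smul_cons hx.ne' (hu ⟨0, hn⟩).ne' h))

lemma specRad_lt_max_of_mulVec_cons (hP : P.IsIrreducible) (hn : 0 < n) (hab : a ≠ b)
    (hx : 0 < x) (hu : ∀ i, 0 < u i) (hPw : P *ᵥ Fin.cons x u = Fin.cons (a * x) (b • u)) :
    specRad P < max a b :=
  specRad_lt_of_mulVec_le_smul_of_ne hP (fun i => (cons_pos hx hu i).le)
    (fun h => hx.ne' (congrFun h 0))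
    (hPw ▸ cons_le_smul_cons hx.le (fun i => (hu i).le) (le_max_left a b) (le_max_right a b))
    (hPw ▸ fun h => hab (eq_of_cons_eq_smul_cons hx.ne' (hu ⟨0, hn⟩).ne' h))

end TwoScale

section ModMat

variable {n : ℕ} {M : Matrix (Fin n) (Fin n) ℝ} {l m : Fin n} {α 𝓛 θ : ℝ}

@[simp] lemma modMat_zero_zero : modMat M l m α 𝓛 θ 0 0 = 0 := by
  simp [modMat, (Fin.succ_ne_zero m).symm]

@[simp] lemma modMat_zero_succ (j : Fin n) :
    modMat M l m α 𝓛 θ 0 j.succ = if j = m then α else 0 := by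
  simp [modMat, Fin.succ_inj]

@[simp] lemma modMat_succ_zero (i : Fin n) :
    modMat M l m α 𝓛 θ i.succ 0 = if i = l then θ else 0 := by
  simp [modMat, Fin.succ_ne_zero, Fin.succ_inj]

@[simp] lemma modMat_succ_succ (i j : Fin n) :
    modMat M l m α 𝓛 θ i.succ j.succ = if i = l ∧ j = m then 𝓛 else M i j := by
  simp [modMat, Fin.succ_ne_zero, Fin.succ_inj, Fin.pred_succ]

lemma modMat_nonneg (hM : ∀ i j, 0 ≤ M i j) (hα : 0 ≤ α) (h𝓛 : 0 ≤ 𝓛) (hθ : 0 ≤ θ) :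
    ∀ a b, 0 ≤ modMat M l m α 𝓛 θ a b := by
  intro a b
  cases a using Fin.cases <;> cases b using Fin.cases <;>
    simp only [modMat_zero_zero, modMat_zero_succ, modMat_succ_zero, modMat_succ_succ] <;>
    (try split_ifs) <;> simp [hM, hα, h𝓛, hθ]

lemma modMat_isIrreducible (hM : M.IsIrreducible) (hα : 0 < α) (h𝓛 : 0 ≤ 𝓛) (hθ : 0 < θ) :
    (modMat M l m α 𝓛 θ).IsIrreducible := by
  have hM' := (isIrreducible_iff_transGen hM.nonneg).1 hM
  rw [isIrreducible_iff_transGen (modMat_nonneg hM.nonneg hα.le h𝓛 hθ.le)]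
  have h0m : 0 < modMat M l m α 𝓛 θ 0 m.succ := by simpa using hα
  have hl0 : 0 < modMat M l m α 𝓛 θ l.succ 0 := by simpa using hθ
  -- the edge `l → m` of `M` is rerouted through the new vertex `0`
  have hlift (i j : Fin n) :
      TransGen (fun a b => 0 < modMat M l m α 𝓛 θ a b) i.succ j.succ := by
    refine (hM' i j).lift' Fin.succ fun a b hab => ?_
    by_cases h : a = l ∧ b = m
    · obtain ⟨rfl, rfl⟩ := h
      exact .tail (.single hl0) h0m
    · exact .single (by simpa [h] using hab)
  intro a b
  cases a using Fin.cases <;> cases b using Fin.cases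
  · exact .head h0m ((hlift m l).tail hl0)
  · exact .head h0m (hlift m _)
  · exact (hlift _ l).tail hl0
  · exact hlift _ _

lemma modMat_mulVec_cons (hsum : α + 𝓛 = M l m) (c : ℝ) (u : Fin n → ℝ) :
    modMat M l m α 𝓛 θ *ᵥ Fin.cons c u =
      Fin.cons (α * u m) (M *ᵥ u + Pi.single l (θ * c - α * u m)) := by
  ext a
  cases a using Fin.cases with
  | zero => simp [mulVec, dotProduct, Fin.sum_univ_succ]
  | succ i =>
    simp only [mulVec, dotProduct, Fin.sum_univ_succ, Fin.cons_zero, Fin.cons_succ,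
      modMat_succ_zero, modMat_succ_succ, Pi.add_apply]
    by_cases hi : i = l
    · have hrow (j : Fin n) : (if i = l ∧ j = m then 𝓛 else M i j) * u j =
          M i j * u j + if j = m then -α * u m else 0 := by
        by_cases hj : j = m
        · subst hi hj; simp [← hsum]; ring
        · simp [hj]
      rw [Finset.sum_congr rfl fun j _ => hrow j, Finset.sum_add_distrib]
      simp [hi]
      ring
    · simp [hi]

lemma modMat_mulVec_cons_of_mulVec_eq_smul (hsum : α + 𝓛 = M l m) (hθ : θ ≠ 0)
    {u : Fin n → ℝ} {r : ℝ} (hMu : M *ᵥ u = r • u) :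
    modMat M l m α 𝓛 θ *ᵥ Fin.cons (α * u m / θ) u = Fin.cons (θ * (α * u m / θ)) (r • u) := by
  rw [modMat_mulVec_cons hsum, hMu, mul_div_cancel₀ _ hθ, sub_self, Pi.single_zero, add_zero]

end ModMat

theorem specRad_modMat_irreducible_general
    {n : ℕ} (M : Matrix (Fin n) (Fin n) ℝ)
    (hM0 : ∀ i j, 0 ≤ M i j)
    (hirr : ∀ i j, ∃ k, 1 ≤ k ∧ 0 < (M ^ k) i j)
    (l m : Fin n) (α 𝓛 : ℝ) (hα : 0 < α) (h𝓛 : 0 ≤ 𝓛) (hsum : α + 𝓛 = M l m)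
    (θ : ℝ) (hθ : 0 < θ) :
    ((θ ≤ specRad (modMat M l m α 𝓛 θ) ∧ specRad (modMat M l m α 𝓛 θ) ≤ specRad M) ↔
      θ ≤ specRad M) ∧
    ((specRad M < specRad (modMat M l m α 𝓛 θ) ∧ specRad (modMat M l m α 𝓛 θ) < θ) ↔
      θ > specRad M) := by
  have hM : M.IsIrreducible := (isIrreducible_iff_exists_pow_pos hM0).2 hirr
  have hP := modMat_isIrreducible (l := l) (m := m) hM hα h𝓛 hθ
  obtain ⟨u, hu, hMu⟩ := exists_pos_mulVec_eq_specRad_smul l.pos hM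
  have hx : 0 < α * u m / θ := div_pos (mul_pos hα (hu m)) hθ
  have hPw := modMat_mulVec_cons_of_mulVec_eq_smul (𝓛 := 𝓛) hsum hθ.ne' hMu
  refine ⟨⟨fun h => h.1.trans h.2, fun h => ?_⟩, ⟨fun h => h.1.trans h.2, fun h => ?_⟩⟩
  · have hmin := min_le_specRad_of_mulVec_cons hP.nonneg hx hu hPw
    have hmax := specRad_le_max_of_mulVec_cons hP.nonneg hx hu hPw
    rw [min_eq_left h] at hmin
    rw [max_eq_right h] at hmax
    exact ⟨hmin, hmax⟩
  · have hmin := min_lt_specRad_of_mulVec_cons hP l.pos h.ne' hx hu hPw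
    have hmax := specRad_lt_max_of_mulVec_cons hP l.pos h.ne' hx hu hPw
    rw [min_eq_right h.le] at hmin
    rw [max_eq_left h.le] at hmax
    exact ⟨hmin, hmax⟩

/-- For a nonnegative irreducible matrix `M` and the modified matrix `M_θ`:
(1) `θ ≤ ρ(M_θ) ≤ ρ(M)` iff `θ ≤ ρ(M)`; (2) `ρ(M) < ρ(M_θ) < θ` iff `θ > ρ(M)`. -/
theorem specRad_modMat_irreducible
    {n : ℕ} (hn : 1 ≤ n) (M : Matrix (Fin n) (Fin n) ℝ)
    (hM0 : ∀ i j, 0 ≤ M i j)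
    (hirr : ∀ i j, ∃ k, 1 ≤ k ∧ 0 < (M ^ k) i j)
    (l m : Fin n) (α 𝓛 : ℝ) (hα : 0 < α) (h𝓛 : 0 ≤ 𝓛) (hsum : α + 𝓛 = M l m)
    (θ : ℝ) (hθ : 0 < θ) :
    ((θ ≤ specRad (modMat M l m α 𝓛 θ) ∧ specRad (modMat M l m α 𝓛 θ) ≤ specRad M) ↔
      θ ≤ specRad M) ∧
    ((specRad M < specRad (modMat M l m α 𝓛 θ) ∧ specRad (modMat M l m α 𝓛 θ) < θ) ↔
      θ > specRad M) :=
  specRad_modMat_irreducible_general M hM0 hirr l m α 𝓛 hα h𝓛 hsum θ hθ
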